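/- arXiv:1910.07469 — 4 statements merged into one kernel-verified Lean document; each statement's English description precedes it below -/
import Mathlib

section
/- Let f be a continuous 2π-periodic piecewise C¹ function. Then for every u ≠ 0, the absolutely convergent series Σ_{p∈ℤ} f̂(p) f̂(−p) K(pu) equals (1/u)∫₀^u (f∗f̌)(x) dx, and for u = 0 it equals ⟨f,f⟩. -/
/-!
The autocorrelation `g = f ∗ f̌` is continuous and `2π`-periodic with `ĝ(p) = f̂(p) f̂(-p)`.
By Parseval for the continuous function `f` and `2|ab| ≤ |a|² + |b|²`, these coefficients are
absolutely summable, so the Fourier series of `g` converges uniformly to `g`. Evaluating it at `0`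
gives `g(0) = ⟨f, f⟩`; integrating it termwise over `[0, u]` gives `∫₀ᵘ g`, because
`∫₀ᵘ e^{ipx} dx = u K(pu)`.
-/

open MeasureTheory Filter Set

noncomputable section

/-- `K(x) = ∫₀¹ e^{iux} du`. -/
def Kker (x : ℝ) : ℂ := ∫ u in (0:ℝ)..1, Complex.exp (Complex.I * u * x)

/-- Fourier coefficient `f̂(p) := (1/2π) ∫₀^{2π} f(t) e^{-ipt} dt`. -/
def fCoeff (g : ℝ → ℝ) (p : ℤ) : ℂ :=
  (1 / (2 * Real.pi)) * ∫ t in (0:ℝ)..(2 * Real.pi),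
    (g t : ℂ) * Complex.exp (-(Complex.I * p * t))

/-- Scalar product `⟨g,h⟩ := (1/2π)∫₀^{2π} g(t)h(t) dt`. -/
def iprod (g h : ℝ → ℝ) : ℝ :=
  (1 / (2 * Real.pi)) * ∫ t in (0:ℝ)..(2 * Real.pi), g t * h t

/-- Convolution `(g∗h)(x) := (1/2π)∫₀^{2π} g(u)h(x−u) du`. -/
def conv (g h : ℝ → ℝ) (x : ℝ) : ℝ :=
  (1 / (2 * Real.pi)) * ∫ u in (0:ℝ)..(2 * Real.pi), g u * h (x - u)

/-- `f̌(x) := f(−x)`. -/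
def checkFn (f : ℝ → ℝ) : ℝ → ℝ := fun x => f (-x)

/-- A continuous `2π`-periodic function which is piecewise `C¹` with a.e. derivative `f'`. -/
def IsPiecewiseC1 (f f' : ℝ → ℝ) : Prop :=
  Continuous f ∧ Function.Periodic f (2 * Real.pi) ∧
  ∃ S : Finset ℝ,
    (∀ x : ℝ, (∀ s ∈ S, ∀ k : ℤ, x ≠ s + 2 * Real.pi * k) → HasDerivAt f (f' x) x) ∧
    (∀ s ∈ S, (∃ L : ℝ, Tendsto f' (nhdsWithin s (Set.Iio s)) (nhds L)) ∧
              (∃ R : ℝ, Tendsto f' (nhdsWithin s (Set.Ioi s)) (nhds R)))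

local instance : Fact (0 < 2 * Real.pi) := ⟨Real.two_pi_pos⟩

open Complex

lemma fourier_coe_eq_exp (n : ℤ) (x : ℝ) :
    fourier n (x : AddCircle (2 * Real.pi)) = exp (I * n * x) := by
  rw [fourier_coe_apply]
  congr 1
  field_simp [Real.pi_ne_zero]
  push_cast
  ring

lemma periodic_exp_neg_I_mul_int (n : ℤ) :
    Function.Periodic (fun x : ℝ => exp (-(I * n * x))) (2 * Real.pi) := by
  have h : ∀ y : ℝ, exp (-(I * n * y)) = fourier (-n) (y : AddCircle (2 * Real.pi)) := by
    intro y; rw [fourier_coe_eq_exp]; push_cast; ring_nf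
  intro x
  simp only [h, AddCircle.coe_add_period]

lemma Function.Periodic.intervalIntegral_comp_sub_right {E : Type*} [NormedAddCommGroup E]
    [NormedSpace ℝ E] {F : ℝ → E} {T : ℝ} (hF : Function.Periodic F T) (u : ℝ) :
    ∫ x in (0:ℝ)..T, F (x - u) = ∫ x in (0:ℝ)..T, F x := by
  rw [intervalIntegral.integral_comp_sub_right, zero_sub, sub_eq_neg_add,
    hF.intervalIntegral_add_eq (-u) 0, zero_add]

lemma Function.Periodic.intervalIntegral_comp_neg {E : Type*} [NormedAddCommGroup E]
    [NormedSpace ℝ E] {F : ℝ → E} {T : ℝ} (hF : Function.Periodic F T) :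
    ∫ x in (0:ℝ)..T, F (-x) = ∫ x in (0:ℝ)..T, F x := by
  have h := hF.intervalIntegral_add_eq (-T) 0
  rw [neg_add_cancel, zero_add] at h
  rw [intervalIntegral.integral_comp_neg, neg_zero, h]

lemma norm_Kker_le_one (x : ℝ) : ‖Kker x‖ ≤ 1 := by
  have h := intervalIntegral.norm_integral_le_of_norm_le_const (a := 0) (b := 1) (C := 1)
    (f := fun u : ℝ => exp (I * u * x)) fun u _ => by
      rw [show I * u * x = ((u * x : ℝ) : ℂ) * I by push_cast; ring, norm_exp_ofReal_mul_I]
  simpa [Kker] using h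

lemma Kker_zero : Kker 0 = 1 := by
  simp [Kker]

lemma integral_exp_I_mul_eq_mul_Kker (n : ℤ) (u : ℝ) :
    ∫ x in (0:ℝ)..u, exp (I * n * x) = u * Kker (n * u) := by
  have h := intervalIntegral.smul_integral_comp_mul_right (a := 0) (b := 1)
    (fun x : ℝ => exp (I * n * x)) u
  rw [zero_mul, one_mul] at h
  rw [← h, Kker, Complex.real_smul]
  congr 1
  refine intervalIntegral.integral_congr fun v _ => ?_
  push_cast
  ring_nf

section Convolution

variable {g h : ℝ → ℝ}

lemma continuous_conv (hg : Continuous g) (hh : Continuous h) : Continuous (conv g h) :=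
  continuous_const.mul <|
    intervalIntegral.continuous_parametric_intervalIntegral_of_continuous' (by fun_prop) _ _

lemma periodic_conv (hh : Function.Periodic h (2 * Real.pi)) :
    Function.Periodic (conv g h) (2 * Real.pi) := by
  intro x
  simp only [conv, add_sub_right_comm, hh _]

lemma conv_checkFn_zero (f : ℝ → ℝ) : conv f (checkFn f) 0 = iprod f f := by
  simp [conv, checkFn, iprod]

lemma continuous_checkFn (hg : Continuous g) : Continuous (checkFn g) :=
  hg.comp continuous_neg

lemma periodic_checkFn (hg : Function.Periodic g (2 * Real.pi)) :
    Function.Periodic (checkFn g) (2 * Real.pi) := fun x => by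
  simp only [checkFn, neg_add, ← sub_eq_add_neg, hg.sub_eq]

end Convolution

section FourierCoefficients

variable {g h : ℝ → ℝ}

lemma periodic_fCoeff_integrand (hg : Function.Periodic g (2 * Real.pi)) (p : ℤ) :
    Function.Periodic (fun t : ℝ => (g t : ℂ) * exp (-(I * p * t))) (2 * Real.pi) :=
  (hg.comp ((↑) : ℝ → ℂ)).mul (periodic_exp_neg_I_mul_int p)

lemma fCoeff_checkFn (hg : Function.Periodic g (2 * Real.pi)) (p : ℤ) :
    fCoeff (checkFn g) p = fCoeff g (-p) := by
  have h := (periodic_fCoeff_integrand hg (-p)).intervalIntegral_comp_neg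
  simp only [fCoeff, checkFn, ← h]
  congr 2
  ext t
  push_cast
  ring_nf

lemma fCoeff_conv (hg : Continuous g) (hh : Continuous h)
    (hhp : Function.Periodic h (2 * Real.pi)) (p : ℤ) :
    fCoeff (conv g h) p = fCoeff g p * fCoeff h p := by
  set e : ℝ → ℂ := fun t => exp (-(I * p * t))
  have he : ∀ x u, e x = e u * e (x - u) := fun x u => by
    simp only [e, ← Complex.exp_add]; push_cast; ring_nf
  have hinner : ∀ u, ∫ x in (0:ℝ)..2 * Real.pi, (h (x - u) : ℂ) * e (x - u)
      = 2 * Real.pi * fCoeff h p := fun u => by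
    rw [(periodic_fCoeff_integrand hhp p).intervalIntegral_comp_sub_right u, fCoeff]
    field_simp [Real.pi_ne_zero]
  have hswap :
      ∫ x in (0:ℝ)..2 * Real.pi, ∫ u in (0:ℝ)..2 * Real.pi, (g u : ℂ) * h (x - u) * e x =
        ∫ u in (0:ℝ)..2 * Real.pi, ∫ x in (0:ℝ)..2 * Real.pi,
          (g u : ℂ) * h (x - u) * e x := by
    have hcont : Continuous (Function.uncurry fun x u => (g u : ℂ) * h (x - u) * e x) := by
      simp only [e]; fun_prop
    exact intervalIntegral_intervalIntegral_swap <|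
      (hcont.continuousOn.integrableOn_compact (isCompact_uIcc.prod isCompact_uIcc)).mono_set
        (Set.prod_mono uIoc_subset_uIcc uIoc_subset_uIcc)
  calc fCoeff (conv g h) p
      = (1 / (2 * Real.pi)) ^ 2 * ∫ x in (0:ℝ)..2 * Real.pi,
          ∫ u in (0:ℝ)..2 * Real.pi, (g u : ℂ) * h (x - u) * e x := by
        have hconv : ∀ x, (conv g h x : ℂ) * e x
            = 1 / (2 * Real.pi) * ∫ u in (0:ℝ)..2 * Real.pi, (g u : ℂ) * h (x - u) * e x := by
          intro x
          simp only [conv, intervalIntegral.integral_mul_const]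
          push_cast [← intervalIntegral.integral_ofReal]
          ring
        change _ * ∫ x in (0:ℝ)..2 * Real.pi, (conv g h x : ℂ) * e x = _
        simp only [hconv, intervalIntegral.integral_const_mul]
        ring
    _ = (1 / (2 * Real.pi)) ^ 2 * ∫ u in (0:ℝ)..2 * Real.pi,
          (g u : ℂ) * e u * ∫ x in (0:ℝ)..2 * Real.pi, (h (x - u) : ℂ) * e (x - u) := by
        rw [hswap]
        congr 1
        refine intervalIntegral.integral_congr fun u _ => ?_
        rw [← intervalIntegral.integral_const_mul]
        refine intervalIntegral.integral_congr fun x _ => ?_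
        simp only [he x u]
        ring
    _ = fCoeff g p * fCoeff h p := by
        simp only [hinner, intervalIntegral.integral_mul_const, fCoeff, e]
        field_simp [Real.pi_ne_zero]

end FourierCoefficients

section FourierSeries

variable {g : ℝ → ℝ}

def circleLift (hc : Continuous g) (hp : Function.Periodic g (2 * Real.pi)) :
    C(AddCircle (2 * Real.pi), ℂ) :=
  ⟨(hp.comp ((↑) : ℝ → ℂ)).lift, (continuous_ofReal.comp hc).quotient_liftOn' _⟩

lemma circleLift_coe (hc : Continuous g) (hp : Function.Periodic g (2 * Real.pi)) (x : ℝ) :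
    circleLift hc hp x = g x :=
  (hp.comp ((↑) : ℝ → ℂ)).lift_coe x

lemma fourierCoeff_circleLift (hc : Continuous g) (hp : Function.Periodic g (2 * Real.pi))
    (p : ℤ) : fourierCoeff (circleLift hc hp) p = fCoeff g p := by
  rw [fourierCoeff_eq_intervalIntegral _ p 0, zero_add, fCoeff, Complex.real_smul]
  congr 1
  · push_cast; ring
  refine intervalIntegral.integral_congr fun x _ => ?_
  rw [smul_eq_mul, circleLift_coe, fourier_coe_eq_exp, mul_comm]
  push_cast
  ring_nf

lemma summable_sq_norm_fCoeff (hc : Continuous g) (hp : Function.Periodic g (2 * Real.pi)) :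
    Summable fun p : ℤ => ‖fCoeff g p‖ ^ 2 := by
  simpa only [fourierCoeff_toLp, fourierCoeff_circleLift] using
    (hasSum_sq_fourierCoeff (ContinuousMap.toLp (E := ℂ) 2 AddCircle.haarAddCircle ℂ
      (circleLift hc hp))).summable

lemma summable_norm_fCoeff_mul_fCoeff_neg (hc : Continuous g)
    (hp : Function.Periodic g (2 * Real.pi)) :
    Summable fun p : ℤ => ‖fCoeff g p * fCoeff g (-p)‖ := by
  have hsq := summable_sq_norm_fCoeff hc hp
  have hsq_neg : Summable fun p : ℤ => ‖fCoeff g (-p)‖ ^ 2 := hsq.comp_injective neg_injective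
  refine .of_nonneg_of_le (fun _ => norm_nonneg _) (fun p => ?_) ((hsq.add hsq_neg).div_const 2)
  rw [norm_mul]
  nlinarith [two_mul_le_add_sq ‖fCoeff g p‖ ‖fCoeff g (-p)‖]

lemma hasSum_fCoeff_mul_exp (hc : Continuous g) (hp : Function.Periodic g (2 * Real.pi))
    (hs : Summable fun p : ℤ => ‖fCoeff g p‖) (x : ℝ) :
    HasSum (fun p : ℤ => fCoeff g p * exp (I * p * x)) (g x) := by
  have hcoeff : fourierCoeff (circleLift hc hp) = fCoeff g :=
    funext (fourierCoeff_circleLift hc hp)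
  have h := has_pointwise_sum_fourier_series_of_summable (hcoeff ▸ hs.of_norm) x
  simpa only [fourierCoeff_circleLift, fourier_coe_eq_exp, circleLift_coe, smul_eq_mul] using h

lemma hasSum_fCoeff_mul_Kker (hc : Continuous g) (hp : Function.Periodic g (2 * Real.pi))
    (hs : Summable fun p : ℤ => ‖fCoeff g p‖) {u : ℝ} (hu : u ≠ 0) :
    HasSum (fun p : ℤ => fCoeff g p * Kker (p * u))
      (((1 / u) * ∫ x in (0:ℝ)..u, g x : ℝ) : ℂ) := by
  have hint : HasSum (fun p : ℤ => ∫ x in (0:ℝ)..u, fCoeff g p * exp (I * p * x))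
      (∫ x in (0:ℝ)..u, (g x : ℂ)) :=
    intervalIntegral.hasSum_integral_of_dominated_convergence (fun p _ => ‖fCoeff g p‖)
      (fun p => (by fun_prop : Continuous fun x : ℝ =>
        fCoeff g p * exp (I * p * x)).aestronglyMeasurable)
      (fun p => ae_of_all _ fun x _ => by
        rw [norm_mul, show I * p * x = ((p * x : ℝ) : ℂ) * I by push_cast; ring,
          norm_exp_ofReal_mul_I, mul_one])
      (ae_of_all _ fun _ _ => hs) intervalIntegrable_const
      (ae_of_all _ fun x _ => hasSum_fCoeff_mul_exp hc hp hs x)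
  simp only [intervalIntegral.integral_const_mul, integral_exp_I_mul_eq_mul_Kker,
    intervalIntegral.integral_ofReal] at hint
  have hu' : (u : ℂ) ≠ 0 := ofReal_ne_zero.mpr hu
  have h := hint.mul_left (u⁻¹ : ℂ)
  simp only [mul_left_comm (fCoeff g _) (u : ℂ), inv_mul_cancel_left₀ hu'] at h
  rwa [one_div, ofReal_mul, ofReal_inv]

end FourierSeries

theorem statement5 (f f' : ℝ → ℝ) (hf : IsPiecewiseC1 f f') :
    (∀ u : ℝ, Summable (fun p : ℤ => ‖fCoeff f p * fCoeff f (-p) * Kker (p * u)‖)) ∧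
    (∀ u : ℝ, u ≠ 0 →
      ∑' p : ℤ, fCoeff f p * fCoeff f (-p) * Kker (p * u) =
        (((1 / u) * ∫ x in (0:ℝ)..u, conv f (checkFn f) x : ℝ) : ℂ)) ∧
    (∑' p : ℤ, fCoeff f p * fCoeff f (-p) * Kker ((p : ℝ) * 0) = ((iprod f f : ℝ) : ℂ)) := by
  obtain ⟨hc, hp, -⟩ := hf
  have hcoeff (p : ℤ) : fCoeff (conv f (checkFn f)) p = fCoeff f p * fCoeff f (-p) := by
    rw [fCoeff_conv hc (continuous_checkFn hc) (periodic_checkFn hp), fCoeff_checkFn hp]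
  have hsum := summable_norm_fCoeff_mul_fCoeff_neg hc hp
  have hgc := continuous_conv hc (continuous_checkFn hc)
  have hgp := periodic_conv (g := f) (periodic_checkFn hp)
  simp only [← hcoeff] at hsum ⊢
  refine ⟨fun u => ?_, fun u hu => ?_, ?_⟩
  · refine hsum.of_nonneg_of_le (fun _ => norm_nonneg _) fun p => ?_
    rw [norm_mul]
    exact mul_le_of_le_one_right (norm_nonneg _) (norm_Kker_le_one _)
  · exact (hasSum_fCoeff_mul_Kker hgc hgp hsum hu).tsum_eq
  · have h := hasSum_fCoeff_mul_exp hgc hgp hsum 0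
    simp only [ofReal_zero, mul_zero, exp_zero, mul_one, conv_checkFn_zero, Kker_zero] at h ⊢
    exact h.tsum_eq
end
end

section
/- Let [a,b] ⊂ ℝ and let (f_n)_{n≥1} be continuous functions on [a,b] that are C¹ outside finitely many points, converging to a C¹ function f_∞ in the C¹ sense: sup_{x∈[a,b]}|f_n(x) − f_∞(x)| + sup |f_n'(x) − f_∞'(x)| → 0 (the second supremum over points where f_n is differentiable). Assume f_∞ is non-degenerate: f_∞(a) f_∞(b) ≠ 0 and ω(f_∞) := inf_{x∈[a,b]} (|f_∞(x)| + |f_∞'(x)|) > 0. Then the zero set of f_∞ in [a,b] is finite, and for all n large enough the number of zeros of f_n in [a,b] equals the number of zeros of f_∞ in [a,b]; in particular N(f_n,[a,b]) → N(f_∞,[a,b]). -/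
open Filter Set

noncomputable section

lemma glue13 {g : ℝ → ℝ} {u e v : ℝ} (hue : u ≤ e) (hev : e ≤ v)
    (h1 : StrictMonoOn g (Set.Icc u e)) (h2 : StrictMonoOn g (Set.Icc e v)) :
    StrictMonoOn g (Set.Icc u v) := by
  intro x hx y hy hxy
  rcases le_total y e with h | h
  · exact h1 ⟨hx.1, hxy.le.trans h⟩ ⟨hy.1, h⟩ hxy
  · rcases le_total x e with h' | h'
    · rcases eq_or_lt_of_le h' with rfl | h''
      · exact h2 ⟨le_rfl, hx.2⟩ ⟨h, hy.2⟩ hxy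
      · have hxe : g x < g e := h1 ⟨hx.1, h'⟩ ⟨hue, le_rfl⟩ h''
        rcases eq_or_lt_of_le h with rfl | hh
        · exact hxe
        · exact hxe.trans (h2 ⟨le_rfl, hev⟩ ⟨h, hy.2⟩ hh)
    · exact h2 ⟨h', hx.2⟩ ⟨h, hy.2⟩ hxy

lemma lem13a (E : Finset ℝ) : ∀ (u v : ℝ) (g g' : ℝ → ℝ),
    ContinuousOn g (Set.Icc u v) →
    (∀ x ∈ Set.Ioo u v \ (E : Set ℝ),
      HasDerivWithinAt g (g' x) (Set.Ioo u v) x ∧ 0 < g' x) →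
    StrictMonoOn g (Set.Icc u v) := by
  classical
  induction E using Finset.induction_on with
  | empty =>
    intro u v g g' hc hd
    apply strictMonoOn_of_hasDerivWithinAt_pos (f' := g') (convex_Icc u v) hc
    · intro x hx
      rw [interior_Icc] at hx ⊢
      exact (hd x ⟨hx, by simp⟩).1
    · intro x hx
      rw [interior_Icc] at hx
      exact (hd x ⟨hx, by simp⟩).2
  | @insert e E' he IH =>
    intro u v g g' hc hd
    by_cases hev : e ∈ Set.Ioo u v
    · have h1 : StrictMonoOn g (Set.Icc u e) := by
        apply IH u e g g' (hc.mono (Set.Icc_subset_Icc le_rfl hev.2.le))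
        intro x hx
        have hx1 : x ∈ Set.Ioo u v := ⟨hx.1.1, hx.1.2.trans hev.2⟩
        have hxE : x ∉ ((insert e E' : Finset ℝ) : Set ℝ) := by
          simp only [Finset.coe_insert, Set.mem_insert_iff]
          rintro (rfl | h)
          · exact absurd hx.1.2 (lt_irrefl _)
          · exact hx.2 h
        obtain ⟨hder, hpos⟩ := hd x ⟨hx1, hxE⟩
        exact ⟨hder.mono (Set.Ioo_subset_Ioo le_rfl hev.2.le), hpos⟩
      have h2 : StrictMonoOn g (Set.Icc e v) := by
        apply IH e v g g' (hc.mono (Set.Icc_subset_Icc hev.1.le le_rfl))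
        intro x hx
        have hx1 : x ∈ Set.Ioo u v := ⟨hev.1.trans hx.1.1, hx.1.2⟩
        have hxE : x ∉ ((insert e E' : Finset ℝ) : Set ℝ) := by
          simp only [Finset.coe_insert, Set.mem_insert_iff]
          rintro (rfl | h)
          · exact absurd hx.1.1 (lt_irrefl _)
          · exact hx.2 h
        obtain ⟨hder, hpos⟩ := hd x ⟨hx1, hxE⟩
        exact ⟨hder.mono (Set.Ioo_subset_Ioo hev.1.le le_rfl), hpos⟩
      exact glue13 hev.1.le hev.2.le h1 h2
    · apply IH u v g g' hc
      intro x hx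
      have hxE : x ∉ ((insert e E' : Finset ℝ) : Set ℝ) := by
        simp only [Finset.coe_insert, Set.mem_insert_iff]
        rintro (rfl | h)
        · exact hev hx.1
        · exact hx.2 h
      exact hd x ⟨hx.1, hxE⟩

lemma lem13b {u v : ℝ} {g g' : ℝ → ℝ} (E : Finset ℝ)
    (hc : ContinuousOn g (Set.Icc u v))
    (hd : ∀ x ∈ Set.Ioo u v \ (E : Set ℝ), HasDerivWithinAt g (g' x) (Set.Ioo u v) x)
    (hsign : (∀ x ∈ Set.Ioo u v \ (E : Set ℝ), 0 < g' x) ∨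
      (∀ x ∈ Set.Ioo u v \ (E : Set ℝ), g' x < 0))
    (huv : u ≤ v) (hprod : g u * g v < 0) :
    ∃! t, t ∈ Set.Icc u v ∧ g t = 0 := by
  have hinj : Set.InjOn g (Set.Icc u v) := by
    rcases hsign with hs | hs
    · exact (lem13a E u v g g' hc (fun x hx => ⟨hd x hx, hs x hx⟩)).injOn
    · have hm := lem13a E u v (fun x => -g x) (fun x => -g' x) hc.neg
        (fun x hx => ⟨(hd x hx).neg, by simpa using hs x hx⟩)
      intro p hp q hq hpq
      exact hm.injOn hp hq (by simp [hpq])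
  have hex : ∃ t ∈ Set.Icc u v, g t = 0 := by
    rcases mul_neg_iff.mp hprod with ⟨hu, hv⟩ | ⟨hu, hv⟩
    · obtain ⟨t, ht, ht0⟩ := intermediate_value_Icc' huv hc ⟨hv.le, hu.le⟩
      exact ⟨t, ht, ht0⟩
    · obtain ⟨t, ht, ht0⟩ := intermediate_value_Icc huv hc ⟨hu.le, hv.le⟩
      exact ⟨t, ht, ht0⟩
  obtain ⟨t, ht, ht0⟩ := hex
  exact ⟨t, ⟨ht, ht0⟩, fun s hs => hinj hs.1 ht (by rw [hs.2, ht0])⟩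

theorem statement13 (a b : ℝ) (hab : a ≤ b)
    (fn : ℕ → ℝ → ℝ) (fn' : ℕ → ℝ → ℝ) (S : ℕ → Finset ℝ)
    -- each `f_n` is continuous on `[a,b]` and `C¹` outside finitely many points
    (hcont : ∀ n, ContinuousOn (fn n) (Set.Icc a b))
    (hderiv : ∀ n, ∀ x ∈ Set.Icc a b \ (S n : Set ℝ),
      HasDerivWithinAt (fn n) (fn' n x) (Set.Icc a b) x)
    -- the limit `f_∞` is `C¹` on `[a,b]`
    (finf : ℝ → ℝ) (finf' : ℝ → ℝ)
    (hfinf : ∀ x ∈ Set.Icc a b, HasDerivWithinAt finf (finf' x) (Set.Icc a b) x)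
    (hfinfc : ContinuousOn finf' (Set.Icc a b))
    -- `C¹` convergence: `sup |f_n − f_∞| + sup |f_n' − f_∞'| → 0`,
    -- the second supremum over points where `f_n` is differentiable
    (hconv : ∀ ε : ℝ, 0 < ε → ∃ N : ℕ, ∀ n ≥ N, ∀ x ∈ Set.Icc a b,
      |fn n x - finf x| < ε ∧ (x ∉ (S n : Set ℝ) → |fn' n x - finf' x| < ε))
    -- non-degeneracy of the limit
    (hnd1 : finf a * finf b ≠ 0)
    (hnd2 : 0 < sInf ((fun x => |finf x| + |finf' x|) '' Set.Icc a b)) :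
    -- the zero set of `f_∞` in `[a,b]` is finite
    {t ∈ Set.Icc a b | finf t = 0}.Finite ∧
    -- for `n` large enough the number of zeros of `f_n` equals that of `f_∞`
    (∃ N : ℕ, ∀ n ≥ N,
      {t ∈ Set.Icc a b | fn n t = 0}.ncard = {t ∈ Set.Icc a b | finf t = 0}.ncard) ∧
    -- in particular, `N(f_n,[a,b]) → N(f_∞,[a,b])`
    Tendsto (fun n => {t ∈ Set.Icc a b | fn n t = 0}.ncard) atTop
      (nhds ({t ∈ Set.Icc a b | finf t = 0}.ncard)) := by
  classical
  set Z := {t ∈ Set.Icc a b | finf t = 0} with hZdef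
  set ω := sInf ((fun x => |finf x| + |finf' x|) '' Set.Icc a b) with hωdef
  have hfa : finf a ≠ 0 := left_ne_zero_of_mul hnd1
  have hfb : finf b ≠ 0 := right_ne_zero_of_mul hnd1
  have hfc : ContinuousOn finf (Set.Icc a b) := fun x hx => (hfinf x hx).continuousWithinAt
  have hbdd : BddBelow ((fun x => |finf x| + |finf' x|) '' Set.Icc a b) :=
    ⟨0, by rintro y ⟨t, ht, rfl⟩; positivity⟩
  have hωle : ∀ x ∈ Set.Icc a b, ω ≤ |finf x| + |finf' x| :=
    fun x hx => csInf_le hbdd ⟨x, hx, rfl⟩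
  -- uniform continuity of the derivative
  obtain ⟨δ₀, hδ₀pos, hδ₀⟩ := Metric.uniformContinuousOn_iff.mp
    (isCompact_Icc.uniformContinuousOn_of_continuous hfinfc) (ω / 2) (half_pos hnd2)
  -- sign of the derivative near a zero
  have hsign : ∀ z ∈ Z, (∀ x ∈ Set.Icc a b, |x - z| ≤ δ₀ / 2 → ω / 2 ≤ finf' x) ∨
      (∀ x ∈ Set.Icc a b, |x - z| ≤ δ₀ / 2 → finf' x ≤ -(ω / 2)) := by
    intro z hz
    have h1 : ω ≤ |finf' z| := by
      have h := hωle z hz.1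
      rw [hz.2, abs_zero, zero_add] at h
      exact h
    rcases le_or_gt 0 (finf' z) with h0 | h0
    · left
      intro x hx hdx
      have h2 := hδ₀ x hx z hz.1 (by rw [Real.dist_eq]; linarith)
      rw [Real.dist_eq] at h2
      have h3 := abs_lt.mp h2
      rw [abs_of_nonneg h0] at h1
      linarith [h3.1]
    · right
      intro x hx hdx
      have h2 := hδ₀ x hx z hz.1 (by rw [Real.dist_eq]; linarith)
      rw [Real.dist_eq] at h2
      have h3 := abs_lt.mp h2
      rw [abs_of_neg h0] at h1
      linarith [h3.2]
  -- injectivity of finf near a zero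
  have hinjD : ∀ z ∈ Z, Set.InjOn finf (Set.Icc (max a (z - δ₀ / 2)) (min b (z + δ₀ / 2))) := by
    intro z hz
    have hsub : Set.Icc (max a (z - δ₀ / 2)) (min b (z + δ₀ / 2)) ⊆ Set.Icc a b :=
      Set.Icc_subset_Icc (le_max_left _ _) (min_le_left _ _)
    have hdist : ∀ x ∈ Set.Icc (max a (z - δ₀ / 2)) (min b (z + δ₀ / 2)), |x - z| ≤ δ₀ / 2 := by
      intro x hx
      have h1 : z - δ₀ / 2 ≤ x := le_trans (le_max_right _ _) hx.1
      have h2 : x ≤ z + δ₀ / 2 := le_trans hx.2 (min_le_right _ _)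
      rw [abs_le]; constructor <;> linarith
    have hIsub : Set.Ioo (max a (z - δ₀ / 2)) (min b (z + δ₀ / 2)) ⊆ Set.Icc a b :=
      Set.Ioo_subset_Icc_self.trans hsub
    have hdio : ∀ x ∈ Set.Ioo (max a (z - δ₀ / 2)) (min b (z + δ₀ / 2)) \ ((∅ : Finset ℝ) : Set ℝ),
        HasDerivWithinAt finf (finf' x) (Set.Ioo (max a (z - δ₀ / 2)) (min b (z + δ₀ / 2))) x :=
      fun x hx => (hfinf x (hIsub hx.1)).mono hIsub
    rcases hsign z hz with hs | hs
    · exact (lem13a ∅ _ _ finf finf' (hfc.mono hsub) (fun x hx =>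
        ⟨hdio x hx, lt_of_lt_of_le (half_pos hnd2)
          (hs x (hIsub hx.1) (hdist x (Set.Ioo_subset_Icc_self hx.1)))⟩)).injOn
    · have hm := lem13a ∅ _ _ (fun x => -finf x) (fun x => -finf' x) (hfc.mono hsub).neg
        (fun x hx => ⟨(hdio x hx).neg, by
          have := hs x (hIsub hx.1) (hdist x (Set.Ioo_subset_Icc_self hx.1))
          have h2 := half_pos hnd2
          simp only [neg_pos]
          linarith⟩)
      intro p hp q hq hpq
      exact hm.injOn hp hq (by simp [hpq])
  -- zeros are δ₀/2-separated
  have hZsep : ∀ z ∈ Z, ∀ t ∈ Z, |t - z| ≤ δ₀ / 2 → t = z := by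
    intro z hz t ht hdist
    obtain ⟨hd1, hd2⟩ := abs_le.mp hdist
    exact hinjD z hz ⟨max_le ht.1.1 (by linarith), le_min ht.1.2 (by linarith)⟩
      ⟨max_le hz.1.1 (by linarith), le_min hz.1.2 (by linarith)⟩ (by rw [ht.2, hz.2])
  -- finiteness of the zero set
  have hZfin : Z.Finite := by
    have hpos : (0 : ℝ) < δ₀ / 2 := half_pos hδ₀pos
    have hinj : Set.InjOn (fun z => ⌊z / (δ₀ / 2)⌋) Z := by
      intro s hs t ht he
      have he' : ⌊s / (δ₀ / 2)⌋ = ⌊t / (δ₀ / 2)⌋ := he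
      have h1 : s / (δ₀ / 2) < ⌊t / (δ₀ / 2)⌋ + 1 := by
        rw [← he']; exact Int.lt_floor_add_one _
      have h2 : t / (δ₀ / 2) < ⌊s / (δ₀ / 2)⌋ + 1 := by
        rw [he']; exact Int.lt_floor_add_one _
      have h3 : (⌊s / (δ₀ / 2)⌋ : ℝ) ≤ s / (δ₀ / 2) := Int.floor_le _
      have h4 : (⌊t / (δ₀ / 2)⌋ : ℝ) ≤ t / (δ₀ / 2) := Int.floor_le _
      have h5 : |s - t| ≤ δ₀ / 2 := by
        have hst : (s - t) / (δ₀ / 2) < 1 := by rw [← div_sub_div_same]; linarith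
        have hts : (t - s) / (δ₀ / 2) < 1 := by rw [← div_sub_div_same]; linarith
        have hst' := (div_lt_one hpos).mp hst
        have hts' := (div_lt_one hpos).mp hts
        rw [abs_le]; constructor <;> linarith
      exact hZsep t ht s hs h5
    apply Set.Finite.of_finite_image _ hinj
    apply (Set.finite_Icc ⌊a / (δ₀ / 2)⌋ ⌊b / (δ₀ / 2)⌋).subset
    rintro y ⟨z, hz, rfl⟩
    refine ⟨Int.floor_le_floor ?_, Int.floor_le_floor ?_⟩ <;> gcongr
    · exact hz.1.1
    · exact hz.1.2
  -- main counting statement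
  obtain ⟨N, hNcard⟩ : ∃ N : ℕ, ∀ n ≥ N,
      {t ∈ Set.Icc a b | fn n t = 0}.ncard = Z.ncard := by
    rcases Z.eq_empty_or_nonempty with hZe | hZne
    · -- no zeros of the limit
      obtain ⟨x₀, hx₀, hmin⟩ := isCompact_Icc.exists_isMinOn (Set.nonempty_Icc.mpr hab) hfc.abs
      have hm : 0 < |finf x₀| := by
        rw [abs_pos]
        intro h0
        have : x₀ ∈ Z := ⟨hx₀, h0⟩
        rw [hZe] at this
        exact this
      obtain ⟨N, hN⟩ := hconv _ hm
      refine ⟨N, fun n hn => ?_⟩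
      have hempty : {t ∈ Set.Icc a b | fn n t = 0} = ∅ := by
        rw [Set.eq_empty_iff_forall_notMem]
        rintro t ⟨ht, h0⟩
        have h1 := (hN n hn t ht).1
        rw [h0, zero_sub, abs_neg] at h1
        exact absurd h1 (not_lt.2 (isMinOn_iff.mp hmin t ht))
      rw [hempty, hZe]
    · -- the limit has finitely many zeros z, each simple
      have hZab : ∀ z ∈ Z, a < z ∧ z < b := by
        intro z hz
        constructor
        · exact lt_of_le_of_ne hz.1.1 (fun h => hfa (by rw [h]; exact hz.2))
        · exact lt_of_le_of_ne hz.1.2 (fun h => hfb (by rw [← h]; exact hz.2))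
      obtain ⟨z₀, hz₀Z, hz₀min⟩ := Set.exists_min_image Z (fun z => min (z - a) (b - z)) hZfin hZne
      set δ := min (δ₀ / 6) (min (z₀ - a) (b - z₀)) with hδdef
      have hδle : δ ≤ δ₀ / 6 := min_le_left _ _
      have hδpos : 0 < δ := lt_min (by linarith)
        (lt_min (by linarith [(hZab z₀ hz₀Z).1]) (by linarith [(hZab z₀ hz₀Z).2]))
      have hδz : ∀ z ∈ Z, δ ≤ z - a ∧ δ ≤ b - z := by
        intro z hz
        have h1 : δ ≤ min (z - a) (b - z) := le_trans (min_le_right _ _) (hz₀min z hz)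
        exact ⟨h1.trans (min_le_left _ _), h1.trans (min_le_right _ _)⟩
      have hJsub : ∀ z ∈ Z, Set.Icc (z - δ) (z + δ) ⊆ Set.Icc a b := fun z hz =>
        Set.Icc_subset_Icc (by linarith [(hδz z hz).1]) (by linarith [(hδz z hz).2])
      have hZsep3 : ∀ z ∈ Z, ∀ z' ∈ Z, z ≠ z' → 3 * δ < |z - z'| := by
        intro z hz z' hz' hne
        by_contra h
        push_neg at h
        exact hne (hZsep z' hz' z hz (by linarith))
      -- the complement of the union of the intervals
      set K := Set.Icc a b \ ⋃ z ∈ Z, Set.Ioo (z - δ) (z + δ) with hKdef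
      have hKcomp : IsCompact K := isCompact_Icc.diff (isOpen_biUnion fun z _ => isOpen_Ioo)
      have haK : a ∈ K := by
        refine ⟨Set.left_mem_Icc.mpr hab, ?_⟩
        intro h
        rw [Set.mem_iUnion₂] at h
        obtain ⟨z, hz, hIoo⟩ := h
        have := (hδz z hz).1
        linarith [hIoo.1]
      have hK_end : ∀ z ∈ Z, ∀ w, |w - z| = δ → a ≤ w → w ≤ b → w ∈ K := by
        intro z hz w hw haw hwb
        refine ⟨⟨haw, hwb⟩, ?_⟩
        intro hmem
        rw [Set.mem_iUnion₂] at hmem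
        obtain ⟨z', hz', hIoo⟩ := hmem
        by_cases hzz : z' = z
        · subst hzz
          rcases (abs_eq hδpos.le).mp hw with h | h
          · linarith [hIoo.2]
          · linarith [hIoo.1]
        · have h3 := hZsep3 z hz z' hz' (fun h => hzz h.symm)
          rcases lt_abs.mp h3 with h | h <;>
            rcases (abs_eq hδpos.le).mp hw with h' | h' <;>
              [skip; skip; skip; skip] <;> linarith [hIoo.1, hIoo.2]
      obtain ⟨x₀, hx₀K, hminK⟩ := hKcomp.exists_isMinOn ⟨a, haK⟩ ((hfc.mono Set.diff_subset).abs)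
      set m := |finf x₀| with hmdef
      have hmpos : 0 < m := by
        rw [hmdef, abs_pos]
        intro h0
        exact hx₀K.2 (Set.mem_iUnion₂.mpr ⟨x₀, ⟨hx₀K.1, h0⟩, ⟨by linarith, by linarith⟩⟩)
      have hmK : ∀ t ∈ K, m ≤ |finf t| := fun t ht => isMinOn_iff.mp hminK t ht
      set ε := min (m / 2) (ω / 4) with hεdef
      have hεm : ε ≤ m / 2 := min_le_left _ _
      have hεω : ε ≤ ω / 4 := min_le_right _ _
      have hεpos : 0 < ε := lt_min (half_pos hmpos) (by linarith)
      obtain ⟨N, hN⟩ := hconv ε hεpos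
      -- in each small interval, f_n has a unique zero
      have hbig : ∀ n ≥ N, ∀ z ∈ Z, ∃! t, t ∈ Set.Icc (z - δ) (z + δ) ∧ fn n t = 0 := by
        intro n hn z hz
        obtain ⟨hda, hdb⟩ := hδz z hz
        have huv : z - δ ≤ z + δ := by linarith
        have hsubJ : Set.Icc (z - δ) (z + δ) ⊆ Set.Icc a b := hJsub z hz
        have hIooJ : Set.Ioo (z - δ) (z + δ) ⊆ Set.Icc a b :=
          Set.Ioo_subset_Icc_self.trans hsubJ
        have hdistJ : ∀ x ∈ Set.Icc (z - δ) (z + δ), |x - z| ≤ δ₀ / 2 := by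
          intro x hx
          have h1 := hx.1; have h2 := hx.2
          rw [abs_le]; constructor <;> linarith
        have humem : (z - δ) ∈ K := hK_end z hz _
          (by rw [show z - δ - z = -δ by ring, abs_neg, abs_of_pos hδpos])
          (by linarith) (by linarith [hz.1.2])
        have hvmem : (z + δ) ∈ K := hK_end z hz _
          (by rw [show z + δ - z = δ by ring, abs_of_pos hδpos])
          (by linarith [hz.1.1]) (by linarith)
        have hum : m ≤ |finf (z - δ)| := hmK _ humem
        have hvm : m ≤ |finf (z + δ)| := hmK _ hvmem
        have hNu := (hN n hn (z - δ) (hsubJ (Set.left_mem_Icc.mpr huv))).1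
        have hNv := (hN n hn (z + δ) (hsubJ (Set.right_mem_Icc.mpr huv))).1
        have hdn : ∀ x ∈ Set.Ioo (z - δ) (z + δ) \ (S n : Set ℝ),
            HasDerivWithinAt (fn n) (fn' n x) (Set.Ioo (z - δ) (z + δ)) x :=
          fun x hx => (hderiv n x ⟨hIooJ hx.1, hx.2⟩).mono hIooJ
        have hzuv : z ∈ Set.Icc (z - δ) (z + δ) := ⟨by linarith, by linarith⟩
        rcases hsign z hz with hs | hs
        · -- increasing case
          have hs' : ∀ x ∈ Set.Ioo (z - δ) (z + δ), ω / 2 ≤ finf' x := fun x hx =>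
            hs x (hIooJ hx) (hdistJ x (Set.Ioo_subset_Icc_self hx))
          have hmono : StrictMonoOn finf (Set.Icc (z - δ) (z + δ)) :=
            lem13a ∅ _ _ finf finf' (hfc.mono hsubJ) (fun x hx =>
              ⟨(hfinf x (hIooJ hx.1)).mono hIooJ,
                lt_of_lt_of_le (half_pos hnd2) (hs' x hx.1)⟩)
          have hfu0 : finf (z - δ) < 0 := by
            have h := hmono (Set.left_mem_Icc.mpr huv) hzuv (by linarith)
            rwa [hz.2] at h
          have hfv0 : 0 < finf (z + δ) := by
            have h := hmono hzuv (Set.right_mem_Icc.mpr huv) (by linarith)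
            rwa [hz.2] at h
          have hfu : finf (z - δ) ≤ -m := by rw [abs_of_neg hfu0] at hum; linarith
          have hfv : m ≤ finf (z + δ) := by rwa [abs_of_pos hfv0] at hvm
          have hnu : fn n (z - δ) < 0 := by
            have h := abs_lt.mp hNu
            linarith [h.2]
          have hnv : 0 < fn n (z + δ) := by
            have h := abs_lt.mp hNv
            linarith [h.1]
          apply lem13b (S n) ((hcont n).mono hsubJ) hdn (Or.inl ?_) huv
            (mul_neg_of_neg_of_pos hnu hnv)
          intro x hx
          have h1 := (hN n hn x (hIooJ hx.1)).2 hx.2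
          have h2 := hs' x hx.1
          have h3 := abs_lt.mp h1
          linarith [h3.1]
        · -- decreasing case
          have hs' : ∀ x ∈ Set.Ioo (z - δ) (z + δ), finf' x ≤ -(ω / 2) := fun x hx =>
            hs x (hIooJ hx) (hdistJ x (Set.Ioo_subset_Icc_self hx))
          have hmono : StrictMonoOn (fun x => -finf x) (Set.Icc (z - δ) (z + δ)) :=
            lem13a ∅ _ _ _ (fun x => -finf' x) (hfc.mono hsubJ).neg (fun x hx =>
              ⟨((hfinf x (hIooJ hx.1)).mono hIooJ).neg, by
                have := hs' x hx.1
                have h2 := half_pos hnd2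
                simp only [neg_pos]
                linarith⟩)
          have hfu0 : 0 < finf (z - δ) := by
            have h : -finf (z - δ) < -finf z :=
              hmono (Set.left_mem_Icc.mpr huv) hzuv (by linarith)
            rw [hz.2, neg_zero] at h
            linarith
          have hfv0 : finf (z + δ) < 0 := by
            have h : -finf z < -finf (z + δ) :=
              hmono hzuv (Set.right_mem_Icc.mpr huv) (by linarith)
            rw [hz.2, neg_zero] at h
            linarith
          have hfu : m ≤ finf (z - δ) := by rwa [abs_of_pos hfu0] at hum
          have hfv : finf (z + δ) ≤ -m := by rw [abs_of_neg hfv0] at hvm; linarith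
          have hnu : 0 < fn n (z - δ) := by
            have h := abs_lt.mp hNu
            linarith [h.1]
          have hnv : fn n (z + δ) < 0 := by
            have h := abs_lt.mp hNv
            linarith [h.2]
          apply lem13b (S n) ((hcont n).mono hsubJ) hdn (Or.inr ?_) huv
            (mul_neg_of_pos_of_neg hnu hnv)
          intro x hx
          have h1 := (hN n hn x (hIooJ hx.1)).2 hx.2
          have h2 := hs' x hx.1
          have h3 := abs_lt.mp h1
          linarith [h3.2]
      refine ⟨N, fun n hn => ?_⟩
      choose! g hg using hbig n hn
      have himg : {t ∈ Set.Icc a b | fn n t = 0} = g '' Z := by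
        ext t
        constructor
        · rintro ⟨htI, ht0⟩
          have htK : t ∉ K := by
            intro hK'
            have h1 := (hN n hn t htI).1
            rw [ht0, zero_sub, abs_neg] at h1
            linarith [hmK t hK']
          have htU : t ∈ ⋃ z ∈ Z, Set.Ioo (z - δ) (z + δ) := by
            by_contra h
            exact htK ⟨htI, h⟩
          rw [Set.mem_iUnion₂] at htU
          obtain ⟨z, hz, htz⟩ := htU
          exact ⟨z, hz, ((hg z hz).2 t ⟨Set.Ioo_subset_Icc_self htz, ht0⟩).symm⟩
        · rintro ⟨z, hz, rfl⟩
          exact ⟨hJsub z hz (hg z hz).1.1, (hg z hz).1.2⟩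
      have hginj : Set.InjOn g Z := by
        intro z hz z' hz' he
        by_contra hne
        have h3 := hZsep3 z hz z' hz' hne
        have h4 := (hg z hz).1.1
        have h5 := (hg z' hz').1.1
        rw [← he] at h5
        rcases lt_abs.mp h3 with h | h
        · linarith [h4.1, h5.2]
        · linarith [h5.1, h4.2]
      rw [himg, Set.ncard_image_of_injOn hginj]
  refine ⟨hZfin, ⟨N, hNcard⟩, Tendsto.congr' ?_ tendsto_const_nhds⟩
  filter_upwards [eventually_ge_atTop N] with n hn using (hNcard n hn).symm

end
end

section
/- Let (p_n) be a sequence of real numbers with p_n/n → α ∈ (0,2π)\πℚ, let Q be a positive integer, and let [a,b] ⊂ ℝ be compact. Then for every i ∈ {0,1,2}, lim_{n→∞} sup_{s,t∈[a,b]} sup{ |K_n^{(i)}( (p+q)p_n + (pt+qs) )| : p, q ∈ ℤ, |p| ≤ Q, |q| ≤ Q, p ≠ −q } = 0. -/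
open Filter Set

noncomputable section

/-- `K_n` and its first two derivatives: `K_n(x) = (1/n) Σ_{k=1}^n e^{ikx/n}`,
`K_n'(x) = (i/n) Σ (k/n) e^{ikx/n}`, `K_n''(x) = −(1/n) Σ (k/n)² e^{ikx/n}`. -/
def Knd : ℕ → ℕ → ℝ → ℂ
  | 0, n, x => (1 / (n:ℂ)) * ∑ k ∈ Finset.Icc 1 n, Complex.exp (Complex.I * k * x / n)
  | 1, n, x => (Complex.I / (n:ℂ)) * ∑ k ∈ Finset.Icc 1 n,
      (((k:ℝ) / n : ℝ) : ℂ) * Complex.exp (Complex.I * k * x / n)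
  | _, n, x => -(1 / (n:ℂ)) * ∑ k ∈ Finset.Icc 1 n,
      (((k:ℝ) / n : ℝ) : ℂ)^2 * Complex.exp (Complex.I * k * x / n)

/-! With `r = exp (i x / n)`, `K_n^{(i)}(x)` is, up to a unimodular factor, `(1/n) Σ_{k=1}^n (k/n)^i r^k`,
and Abel summation against the increasing weights `(k/n)^i` gives `|K_n^{(i)}(x)| ≤ 2 / (n |1 - r|)`.
For fixed `p, q` with `m = p + q ≠ 0`, the point `x = m p_n + (p t + q s)` satisfies `x / n → m α`
uniformly in `s, t ∈ [a, b]`, and `exp (i m α) ≠ 1` because `α ∉ πℚ`; so `|1 - r|` stays bounded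
below and `K_n^{(i)}(x) = O(1/n)`. Only finitely many pairs `(p, q)` occur. -/

open Complex

-- Abel summation: with the tail term `a n r^(n+1)` added, passing from `n` to `n + 1` only adds
-- `(a (n+1) - a n) r^(n+1)`, so the norms telescope to `a n`.
theorem norm_one_sub_mul_sum_add_le {r : ℂ} (hr : ‖r‖ ≤ 1) {a : ℕ → ℝ} (ha : Monotone a)
    (ha0 : 0 ≤ a 0) (n : ℕ) :
    ‖(1 - r) * ∑ k ∈ Finset.Icc 1 n, (a k : ℂ) * r ^ k + a n * r ^ (n + 1)‖ ≤ a n := by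
  induction n with
  | zero => simpa [abs_of_nonneg ha0] using mul_le_mul_of_nonneg_left hr ha0
  | succ n ih =>
    have hstep : 0 ≤ a (n + 1) - a n := sub_nonneg.2 (ha n.le_succ)
    have hsplit : (1 - r) * ∑ k ∈ Finset.Icc 1 (n + 1), (a k : ℂ) * r ^ k
          + a (n + 1) * r ^ (n + 1 + 1)
        = ((1 - r) * ∑ k ∈ Finset.Icc 1 n, (a k : ℂ) * r ^ k + a n * r ^ (n + 1))
          + ((a (n + 1) - a n : ℝ) : ℂ) * r ^ (n + 1) := by
      rw [Finset.sum_Icc_succ_top (by omega)]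
      push_cast
      ring
    calc _ ≤ a n + (a (n + 1) - a n) * 1 := by
          rw [hsplit]
          refine (norm_add_le _ _).trans (add_le_add ih ?_)
          rw [norm_mul, norm_real, Real.norm_of_nonneg hstep, norm_pow]
          exact mul_le_mul_of_nonneg_left (pow_le_one₀ (norm_nonneg r) hr) hstep
      _ = a (n + 1) := by ring

theorem norm_one_sub_mul_sum_le {r : ℂ} (hr : ‖r‖ ≤ 1) {a : ℕ → ℝ} (ha : Monotone a)
    (ha0 : 0 ≤ a 0) (n : ℕ) :
    ‖(1 - r) * ∑ k ∈ Finset.Icc 1 n, (a k : ℂ) * r ^ k‖ ≤ 2 * a n := by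
  have htail : ‖(a n : ℂ) * r ^ (n + 1)‖ ≤ a n := by
    rw [norm_mul, norm_real, Real.norm_of_nonneg (ha0.trans (ha n.zero_le)), norm_pow]
    exact mul_le_of_le_one_right (ha0.trans (ha n.zero_le)) (pow_le_one₀ (norm_nonneg r) hr)
  calc _ ≤ ‖(1 - r) * ∑ k ∈ Finset.Icc 1 n, (a k : ℂ) * r ^ k + a n * r ^ (n + 1)‖
        + ‖(a n : ℂ) * r ^ (n + 1)‖ := norm_le_add_norm_add _ _
    _ ≤ 2 * a n := by linarith [norm_one_sub_mul_sum_add_le hr ha ha0 n]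

theorem norm_sum_pow_div_mul_exp_mul_le (n j : ℕ) (x : ℝ) :
    ‖∑ k ∈ Finset.Icc 1 n, (((k : ℝ) / n : ℝ) : ℂ) ^ j * exp (I * k * x / n)‖
      * ‖1 - exp (I * (x / n : ℝ))‖ ≤ 2 := by
  rcases n.eq_zero_or_pos with rfl | hn
  · simp
  set r := exp (I * (x / n : ℝ))
  have hr : ‖r‖ = 1 := by simp [r, norm_exp]
  have hmono : Monotone fun k : ℕ => ((k : ℝ) / n) ^ j := fun k l hkl => by
    dsimp only
    gcongr
  have hsum : ∑ k ∈ Finset.Icc 1 n, (((k : ℝ) / n : ℝ) : ℂ) ^ j * exp (I * k * x / n)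
      = ∑ k ∈ Finset.Icc 1 n, ((((k : ℝ) / n) ^ j : ℝ) : ℂ) * r ^ k := by
    refine Finset.sum_congr rfl fun k _ => ?_
    rw [← exp_nat_mul]
    push_cast
    ring_nf
  have := norm_one_sub_mul_sum_le hr.le hmono (by positivity) n
  rw [norm_mul, mul_comm, div_self (by positivity), one_pow, mul_one] at this
  rwa [hsum]

theorem norm_Knd_mul_le (i n : ℕ) (x : ℝ) :
    ‖Knd i n x‖ * (n * ‖1 - exp (I * (x / n : ℝ))‖) ≤ 2 := by
  have hscaled : ∀ c : ℂ, ‖c‖ = 1 → ∀ j : ℕ,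
      ‖c / n * ∑ k ∈ Finset.Icc 1 n, (((k : ℝ) / n : ℝ) : ℂ) ^ j * exp (I * k * x / n)‖
        * (n * ‖1 - exp (I * (x / n : ℝ))‖) ≤ 2 := by
    intro c hc j
    rcases n.eq_zero_or_pos with rfl | hn
    · simp
    have hcancel : 1 / (n : ℝ) * n = 1 := one_div_mul_cancel (by positivity)
    have := norm_sum_pow_div_mul_exp_mul_le n j x
    rw [norm_mul, norm_div, hc, norm_natCast]
    linear_combination this + (‖∑ k ∈ Finset.Icc 1 n, (((k : ℝ) / n : ℝ) : ℂ) ^ j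
      * exp (I * k * x / n)‖ * ‖1 - exp (I * (x / n : ℝ))‖) * hcancel
  match i with
  | 0 => simpa [Knd] using hscaled 1 norm_one 0
  | 1 => simpa [Knd] using hscaled I norm_I 1
  | _ + 2 => simpa [Knd, neg_div] using hscaled (-1) (by simp) 2

theorem norm_exp_I_mul_sub_exp_I_mul_le (u v : ℝ) :
    ‖exp (I * u) - exp (I * v)‖ ≤ |u - v| := by
  have hfactor : exp (I * u) - exp (I * v) = exp (I * v) * (exp (I * (u - v : ℝ)) - 1) := by
    rw [mul_sub, ← exp_add]
    push_cast
    ring_nf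
  rw [hfactor, norm_mul, norm_exp_I_mul_ofReal, one_mul]
  exact Real.norm_exp_I_mul_ofReal_sub_one_le

theorem eventually_norm_Knd_lt (i : ℕ) {θ : ℝ} (hθ : exp (I * θ) ≠ 1) {ε : ℝ} (hε : 0 < ε) :
    ∀ᶠ n : ℕ in atTop, ∀ y : ℝ, |y / n - θ| ≤ ‖1 - exp (I * θ)‖ / 2 → ‖Knd i n y‖ < ε := by
  set δ := ‖1 - exp (I * θ)‖
  have hδ : 0 < δ := norm_pos_iff.2 (sub_ne_zero.2 hθ.symm)
  filter_upwards [tendsto_natCast_atTop_atTop.eventually_gt_atTop (4 / (δ * ε))]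
    with n hn y hy
  have hn0 : (0 : ℝ) < n := lt_trans (by positivity) hn
  have hfar : δ / 2 ≤ ‖1 - exp (I * (y / n : ℝ))‖ := by
    have := norm_exp_I_mul_sub_exp_I_mul_le (y / n) θ
    have := norm_sub_le (1 - exp (I * (y / n : ℝ))) (exp (I * θ) - exp (I * (y / n : ℝ)))
    rw [norm_sub_rev (exp (I * θ))] at this
    simp only [sub_sub_sub_cancel_right] at this
    linarith
  have hK : ‖Knd i n y‖ * (n * (δ / 2)) ≤ 2 := le_trans
    (mul_le_mul_of_nonneg_left (mul_le_mul_of_nonneg_left hfar hn0.le) (norm_nonneg _))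
    (norm_Knd_mul_le i n y)
  rw [div_lt_iff₀ (by positivity)] at hn
  by_contra! hge
  nlinarith [mul_le_mul_of_nonneg_right hge (by positivity : (0 : ℝ) ≤ n * δ)]

theorem exp_I_mul_int_mul_ne_one {α : ℝ} (hα : ∀ q : ℚ, α ≠ Real.pi * q) {m : ℤ} (hm : m ≠ 0) :
    exp (I * ((m : ℝ) * α : ℝ)) ≠ 1 := by
  intro h
  obtain ⟨k, hk⟩ := exp_eq_one_iff.1 h
  have hmα : (m : ℝ) * α = k * (2 * Real.pi) := by simpa using congrArg im hk
  apply hα (2 * k / m)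
  push_cast
  field_simp
  linarith

theorem eventually_abs_div_sub_mul_le (u v : ℝ) {p : ℕ → ℝ} {α : ℝ}
    (hp : Tendsto (fun n : ℕ => p n / n) atTop (nhds α)) (a b : ℝ) {η : ℝ} (hη : 0 < η) :
    ∀ᶠ n : ℕ in atTop, ∀ s ∈ Icc a b, ∀ t ∈ Icc a b,
      |((u + v) * p n + (u * t + v * s)) / n - (u + v) * α| ≤ η := by
  set C := (|u| + |v|) * max |a| |b|
  have hlim : Tendsto (fun n : ℕ => |u + v| * |p n / n - α| + C / n) atTop (nhds 0) := by
    simpa using ((hp.sub_const α).abs.const_mul |u + v|).add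
      (tendsto_const_div_atTop_nhds_zero_nat C)
  filter_upwards [hlim.eventually (ge_mem_nhds hη)] with n hn s hs t ht
  have hst : |u * t + v * s| ≤ C := by
    calc |u * t + v * s| ≤ |u| * |t| + |v| * |s| := by
          rw [← abs_mul, ← abs_mul]; exact abs_add_le _ _
      _ ≤ |u| * max |a| |b| + |v| * max |a| |b| := by
          gcongr
          exacts [abs_le_max_abs_abs ht.1 ht.2, abs_le_max_abs_abs hs.1 hs.2]
      _ = C := (add_mul _ _ _).symm
  calc _ = |(u + v) * (p n / n - α) + (u * t + v * s) / n| := by ring_nf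
    _ ≤ |u + v| * |p n / n - α| + C / n := by
        rw [← abs_mul]
        refine (abs_add_le _ _).trans (add_le_add_right ?_ _)
        rw [abs_div, Nat.abs_cast]
        gcongr
    _ ≤ η := hn

theorem statement16_general
    (α : ℝ) (hirr : ∀ q : ℚ, α ≠ Real.pi * q)
    (p : ℕ → ℝ) (hp : Tendsto (fun n : ℕ => p n / n) atTop (nhds α))
    (Q : ℕ) (a b : ℝ) :
    ∀ i : ℕ, i ≤ 2 → ∀ ε : ℝ, 0 < ε → ∃ N : ℕ, ∀ n ≥ N,
      ∀ s ∈ Set.Icc a b, ∀ t ∈ Set.Icc a b, ∀ pp q : ℤ,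
        |pp| ≤ (Q : ℤ) → |q| ≤ (Q : ℤ) → pp ≠ -q →
        ‖Knd i n (((pp : ℝ) + (q : ℝ)) * p n + ((pp : ℝ) * t + (q : ℝ) * s))‖
          < ε := by
  intro i _ ε hε
  have hpair : ∀ pq ∈ Finset.Icc (-(Q : ℤ)) Q ×ˢ Finset.Icc (-(Q : ℤ)) Q,
      ∀ᶠ n : ℕ in atTop, pq.1 ≠ -pq.2 → ∀ s ∈ Icc a b, ∀ t ∈ Icc a b,
        ‖Knd i n (((pq.1 : ℝ) + pq.2) * p n + (pq.1 * t + pq.2 * s))‖ < ε := by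
    rintro ⟨pp, q⟩ -
    by_cases hpq : pp = -q
    · exact Eventually.of_forall fun _ h => absurd hpq h
    have hθ : exp (I * (((pp : ℝ) + q) * α : ℝ)) ≠ 1 := by
      simpa using exp_I_mul_int_mul_ne_one hirr (m := pp + q) (by omega)
    filter_upwards [eventually_norm_Knd_lt i hθ hε,
      eventually_abs_div_sub_mul_le pp q hp a b (half_pos (norm_pos_iff.2 (sub_ne_zero.2 hθ.symm)))]
      with n hK hclose _ s hs t ht
    exact hK _ (hclose s hs t ht)
  obtain ⟨N, hN⟩ := eventually_atTop.1 ((eventually_all_finset _).2 hpair)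
  refine ⟨N, fun n hn s hs t ht pp q hpp hq hpq => hN n hn (pp, q) ?_ hpq s hs t ht⟩
  simp only [Finset.mem_product, Finset.mem_Icc, ← abs_le]
  exact ⟨hpp, hq⟩

theorem statement16
    (α : ℝ) (hα : α ∈ Set.Ioo 0 (2 * Real.pi)) (hirr : ∀ q : ℚ, α ≠ Real.pi * q)
    (p : ℕ → ℝ) (hp : Tendsto (fun n : ℕ => p n / n) atTop (nhds α))
    (Q : ℕ) (hQ : 1 ≤ Q) (a b : ℝ) (hab : a ≤ b) :
    ∀ i : ℕ, i ≤ 2 → ∀ ε : ℝ, 0 < ε → ∃ N : ℕ, ∀ n ≥ N,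
      ∀ s ∈ Set.Icc a b, ∀ t ∈ Set.Icc a b, ∀ pp q : ℤ,
        |pp| ≤ (Q : ℤ) → |q| ≤ (Q : ℤ) → pp ≠ -q →
        ‖Knd i n (((pp : ℝ) + (q : ℝ)) * p n + ((pp : ℝ) * t + (q : ℝ) * s))‖
          < ε :=
  statement16_general α hirr p hp Q a b

end
end

section
/- Let 0 < γ < 1/2 and [a,b] ⊂ ℝ compact. Then there exists C > 0 such that for all n ≥ 1 and all j ∈ {0,1,2}: sup_{s,t∈[a,b]} Σ_{p∈ℤ, |p|≤n^γ} | K_n^{(j)}(p(t−s)) − K^{(j)}(p(t−s)) | ≤ C / n^{1−2γ}. -/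
open Filter Set

noncomputable section

/-- `K` and its first two derivatives: `K(x) = ∫₀¹ e^{iux} du`,
`K'(x) = i∫₀¹ u e^{iux} du`, `K''(x) = −∫₀¹ u² e^{iux} du`. -/
def Kd : ℕ → ℝ → ℂ
  | 0, x => ∫ u in (0:ℝ)..1, Complex.exp (Complex.I * u * x)
  | 1, x => Complex.I * ∫ u in (0:ℝ)..1, (u:ℂ) * Complex.exp (Complex.I * u * x)
  | _, x => - ∫ u in (0:ℝ)..1, (u:ℂ)^2 * Complex.exp (Complex.I * u * x)

/-!
With `f_j(u) = u ^ j e^{iux}`, `K^{(j)}(x) = i ^ j ∫₀¹ f_j` and `K_n^{(j)}(x)` is `i ^ j` times the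
right-endpoint Riemann sum of `f_j` with mesh `1/n`. Since `f_j` is `(j + |x|)`-Lipschitz on
`[0, 1]`, each term is at most `(2 + |x|) / n`. For `|p| ≤ n ^ γ` and `s, t ∈ [a, b]` we have
`|p (t - s)| ≤ n ^ γ |b - a|`, and there are at most `3 n ^ γ` such `p`, so the sum is
`O(n ^ {2γ} / n)`.
-/

open scoped NNReal

section RiemannSum

variable {E : Type*} [NormedAddCommGroup E] [NormedSpace ℝ E] [CompleteSpace E]
  {f : ℝ → E} {K : ℝ≥0}

theorem norm_smul_sub_intervalIntegral_le_of_lipschitzOnWith {c d : ℝ} (hcd : c ≤ d)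
    (hf : LipschitzOnWith K f (Icc c d)) :
    ‖(d - c) • f d - ∫ u in c..d, f u‖ ≤ K * (d - c) ^ 2 := by
  have hint : IntervalIntegrable f MeasureTheory.volume c d :=
    hf.continuousOn.intervalIntegrable_of_Icc hcd
  have hbound : ∀ u ∈ uIoc c d, ‖f d - f u‖ ≤ K * (d - c) := by
    intro u hu
    rw [uIoc_of_le hcd] at hu
    calc ‖f d - f u‖ ≤ K * dist d u :=
          hf.norm_sub_le (right_mem_Icc.2 hcd) (Ioc_subset_Icc_self hu)
      _ ≤ K * (d - c) := by
          gcongr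
          rw [Real.dist_eq, abs_of_nonneg (by linarith [hu.2])]
          linarith [hu.1]
  calc ‖(d - c) • f d - ∫ u in c..d, f u‖ = ‖∫ u in c..d, (f d - f u)‖ := by
        rw [intervalIntegral.integral_sub intervalIntegrable_const hint,
          intervalIntegral.integral_const]
    _ ≤ K * (d - c) * |d - c| := intervalIntegral.norm_integral_le_of_norm_le_const hbound
    _ = K * (d - c) ^ 2 := by rw [abs_of_nonneg (by linarith)]; ring

theorem norm_riemannSum_sub_intervalIntegral_le_of_lipschitzOnWith
    (hf : LipschitzOnWith K f (Icc 0 1)) {n : ℕ} (hn : n ≠ 0) :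
    ‖(n : ℝ)⁻¹ • ∑ k ∈ Finset.Icc 1 n, f (k / n) - ∫ u in (0 : ℝ)..1, f u‖ ≤ K / n := by
  have hn0 : (0 : ℝ) < n := by positivity
  set x : ℕ → ℝ := fun k => k / n with hx
  have hx_mono : Monotone x := fun i j hij => by simp only [hx]; gcongr
  have hx_mem : ∀ k ≤ n, x k ∈ Icc (0 : ℝ) 1 := fun k hk =>
    ⟨by positivity, div_le_one_of_le₀ (by exact_mod_cast hk) hn0.le⟩
  have hx_step : ∀ k, x (k + 1) - x k = (n : ℝ)⁻¹ := fun k => by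
    simp only [hx]; push_cast; field_simp; ring
  have hpiece : ∀ k ∈ Finset.range n, ‖(n : ℝ)⁻¹ • f (x (k + 1)) - ∫ u in x k..x (k + 1), f u‖
      ≤ K * ((n : ℝ)⁻¹) ^ 2 := by
    intro k hk
    have hk : k + 1 ≤ n := Finset.mem_range.1 hk
    rw [← hx_step k]
    exact norm_smul_sub_intervalIntegral_le_of_lipschitzOnWith (hx_mono k.le_succ)
      (hf.mono (Icc_subset_Icc (hx_mem k (by omega)).1 (hx_mem (k + 1) hk).2))
  have hsum : (n : ℝ)⁻¹ • ∑ k ∈ Finset.Icc 1 n, f (k / n) =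
      ∑ k ∈ Finset.range n, (n : ℝ)⁻¹ • f (x (k + 1)) := by
    rw [Finset.smul_sum, Finset.range_eq_Ico, Finset.sum_Ico_add' (fun k => (n : ℝ)⁻¹ • f (x k)),
      zero_add, Finset.Ico_add_one_right_eq_Icc]
  have hint : ∫ u in (0 : ℝ)..1, f u = ∑ k ∈ Finset.range n, ∫ u in x k..x (k + 1), f u := by
    rw [intervalIntegral.sum_integral_adjacent_intervals]
    · simp [hx, hn0.ne']
    · intro k hk
      exact (hf.continuousOn.mono (Icc_subset_Icc (hx_mem k hk.le).1 (hx_mem (k + 1) hk).2)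
        ).intervalIntegrable_of_Icc (hx_mono k.le_succ)
  calc _ = ‖∑ k ∈ Finset.range n, ((n : ℝ)⁻¹ • f (x (k + 1)) - ∫ u in x k..x (k + 1), f u)‖ := by
        rw [hsum, hint, Finset.sum_sub_distrib]
    _ ≤ ∑ k ∈ Finset.range n, K * ((n : ℝ)⁻¹) ^ 2 := norm_sum_le_of_le _ hpiece
    _ = K / n := by rw [Finset.sum_const, Finset.card_range, nsmul_eq_mul]; field_simp

end RiemannSum

def kernelIntegrand (j : ℕ) (x u : ℝ) : ℂ := (u : ℂ) ^ j * Complex.exp (Complex.I * u * x)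

theorem Kd_eq_I_pow_mul_integral {j : ℕ} (hj : j ≤ 2) (x : ℝ) :
    Kd j x = Complex.I ^ j * ∫ u in (0 : ℝ)..1, kernelIntegrand j x u := by
  interval_cases j <;> simp [Kd, kernelIntegrand]

theorem Knd_eq_I_pow_mul_riemannSum {j : ℕ} (hj : j ≤ 2) (n : ℕ) (x : ℝ) :
    Knd j n x = Complex.I ^ j *
      ((n : ℝ)⁻¹ • ∑ k ∈ Finset.Icc 1 n, kernelIntegrand j x (k / n)) := by
  have hexp : ∀ k : ℕ, Complex.exp (Complex.I * ((k / n : ℝ) : ℂ) * x) =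
      Complex.exp (Complex.I * k * x / n) := fun k => by
    push_cast; ring_nf
  interval_cases j <;>
    simp only [Knd, kernelIntegrand, hexp, Complex.real_smul, Complex.ofReal_inv,
      Complex.ofReal_natCast, pow_zero, pow_one, one_mul, Complex.I_sq] <;> ring

theorem hasDerivAt_kernelIntegrand (j : ℕ) (x u : ℝ) :
    HasDerivAt (kernelIntegrand j x)
      (j * (u : ℂ) ^ (j - 1) * Complex.exp (Complex.I * u * x)
        + (u : ℂ) ^ j * (Complex.I * x) * Complex.exp (Complex.I * u * x)) u := by
  have hexp : HasDerivAt (fun z : ℂ => Complex.exp (Complex.I * z * x))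
      (Complex.exp (Complex.I * u * x) * (Complex.I * 1 * x)) u :=
    (((hasDerivAt_id (u : ℂ)).const_mul Complex.I).mul_const (x : ℂ)).cexp
  convert ((hasDerivAt_pow j (u : ℂ)).mul hexp).comp_ofReal using 1
  · rfl
  · ring

theorem lipschitzOnWith_kernelIntegrand (j : ℕ) (x : ℝ) :
    LipschitzOnWith (j + ‖x‖₊) (kernelIntegrand j x) (Icc 0 1) := by
  refine (convex_Icc 0 1).lipschitzOnWith_of_nnnorm_hasDerivWithin_le
    (fun u _ => (hasDerivAt_kernelIntegrand j x u).hasDerivWithinAt) fun u hu => ?_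
  have hpow : ∀ m : ℕ, ‖(u : ℂ) ^ m‖ ≤ 1 := fun m => by
    rw [norm_pow, Complex.norm_real, Real.norm_of_nonneg hu.1]
    exact pow_le_one₀ hu.1 hu.2
  have hexp : ‖Complex.exp (Complex.I * u * x)‖ = 1 := by
    rw [Complex.norm_exp]; simp
  rw [← NNReal.coe_le_coe, coe_nnnorm]
  push_cast
  refine (norm_add_le _ _).trans (add_le_add ?_ ?_)
  · rw [norm_mul, norm_mul, hexp, mul_one, Complex.norm_natCast]
    exact mul_le_of_le_one_right (Nat.cast_nonneg j) (hpow _)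
  · rw [norm_mul, norm_mul, hexp, mul_one, norm_mul, Complex.norm_I, one_mul, Complex.norm_real]
    exact mul_le_of_le_one_left (norm_nonneg _) (hpow _)

theorem norm_Knd_sub_Kd_le {j : ℕ} (hj : j ≤ 2) {n : ℕ} (hn : n ≠ 0) (x : ℝ) :
    ‖Knd j n x - Kd j x‖ ≤ (j + |x|) / n := by
  rw [Knd_eq_I_pow_mul_riemannSum hj, Kd_eq_I_pow_mul_integral hj, ← mul_sub, norm_mul,
    norm_pow, Complex.norm_I, one_pow, one_mul]
  simpa using norm_riemannSum_sub_intervalIntegral_le_of_lipschitzOnWith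
    (lipschitzOnWith_kernelIntegrand j x) hn

theorem abs_le_of_mem_Icc_neg_floor_floor {P : ℝ} {p : ℤ} (hp : p ∈ Finset.Icc (-⌊P⌋) ⌊P⌋) :
    |(p : ℝ)| ≤ P := by
  rw [Finset.mem_Icc, neg_le] at hp
  rw [abs_le, neg_le]
  exact ⟨by exact_mod_cast Int.le_floor.1 hp.1, Int.le_floor.1 hp.2⟩

theorem card_Icc_neg_floor_floor_le {P : ℝ} (hP : 0 ≤ P) :
    ((Finset.Icc (-⌊P⌋) ⌊P⌋).card : ℝ) ≤ 2 * P + 1 := by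
  have hfloor : 0 ≤ ⌊P⌋ := Int.floor_nonneg.2 hP
  rw [Int.card_Icc, show ⌊P⌋ + 1 - -⌊P⌋ = 2 * ⌊P⌋ + 1 by ring]
  have hcast : (((2 * ⌊P⌋ + 1).toNat : ℕ) : ℝ) = 2 * (⌊P⌋ : ℝ) + 1 := by
    exact_mod_cast Int.toNat_of_nonneg (by omega)
  rw [hcast]
  linarith [Int.floor_le P]

theorem statement17_general (γ : ℝ) (hγ0 : 0 < γ) (a b : ℝ) :
    ∃ C : ℝ, 0 < C ∧ ∀ n : ℕ, 1 ≤ n → ∀ j : ℕ, j ≤ 2 →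
      ∀ s ∈ Set.Icc a b, ∀ t ∈ Set.Icc a b,
      ∑ pp ∈ Finset.Icc (-(⌊(n:ℝ) ^ γ⌋)) ⌊(n:ℝ) ^ γ⌋,
        ‖Knd j n ((pp : ℝ) * (t - s)) - Kd j ((pp : ℝ) * (t - s))‖
      ≤ C / (n:ℝ) ^ (1 - 2 * γ) := by
  refine ⟨3 * (2 + |b - a|), by positivity, fun n hn j hj s hs t ht => ?_⟩
  set P := (n : ℝ) ^ γ
  have hn0 : (0 : ℝ) < n := by exact_mod_cast hn
  have hP : 1 ≤ P := Real.one_le_rpow (by exact_mod_cast hn) hγ0.le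
  have hts : |t - s| ≤ |b - a| := (Real.dist_le_of_mem_Icc ht hs).trans (le_abs_self _)
  have hterm : ∀ p ∈ Finset.Icc (-⌊P⌋) ⌊P⌋,
      ‖Knd j n (p * (t - s)) - Kd j (p * (t - s))‖ ≤ (2 + P * |b - a|) / n := by
    intro p hp
    refine (norm_Knd_sub_Kd_le hj (by omega) _).trans ?_
    rw [abs_mul]
    gcongr
    · exact_mod_cast hj
    · exact abs_le_of_mem_Icc_neg_floor_floor hp
  have hscale : (n : ℝ) ^ (1 - 2 * γ) = n / P ^ 2 := by
    rw [eq_div_iff (by positivity), ← Real.rpow_natCast, ← Real.rpow_mul hn0.le,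
      ← Real.rpow_add hn0, show 1 - 2 * γ + γ * (2 : ℕ) = 1 by push_cast; ring, Real.rpow_one]
  calc _ ≤ (Finset.Icc (-⌊P⌋) ⌊P⌋).card • ((2 + P * |b - a|) / n) :=
        Finset.sum_le_card_nsmul _ _ _ hterm
    _ ≤ (3 * P) * (P * (2 + |b - a|) / n) := by
        rw [nsmul_eq_mul]
        gcongr
        · linarith [card_Icc_neg_floor_floor_le (zero_le_one.trans hP)]
        · nlinarith
    _ = 3 * (2 + |b - a|) / n ^ (1 - 2 * γ) := by
        rw [hscale]
        field_simp

theorem statement17 (γ : ℝ) (hγ0 : 0 < γ) (hγ : γ < 1/2) (a b : ℝ) (hab : a ≤ b) :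
    ∃ C : ℝ, 0 < C ∧ ∀ n : ℕ, 1 ≤ n → ∀ j : ℕ, j ≤ 2 →
      ∀ s ∈ Set.Icc a b, ∀ t ∈ Set.Icc a b,
      ∑ pp ∈ Finset.Icc (-(⌊(n:ℝ) ^ γ⌋)) ⌊(n:ℝ) ^ γ⌋,
        ‖Knd j n ((pp : ℝ) * (t - s)) - Kd j ((pp : ℝ) * (t - s))‖
      ≤ C / (n:ℝ) ^ (1 - 2 * γ) :=
  statement17_general γ hγ0 a b

end
end
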